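/- arXiv:2408.17082 — 4 statements merged into one kernel-verified Lean document; each statement's English description precedes it below -/
import Mathlib

section
/- The polynomial x^6 - 3x^5 - 6x^4 + 4x^3 + 5x^2 - x - 1 is irreducible over ℚ. -/
open Polynomial

noncomputable def f2 : (ZMod 2)[X] := X^6+X^5+X^2+X+1

lemma two0 : (2 : (ZMod 2)[X]) = 0 := by
  have h := congrArg (C : ZMod 2 → (ZMod 2)[X]) (show (2:ZMod 2) = 0 by decide)
  rw [map_ofNat, map_zero] at h; exact h

lemma case0 (h : (X : (ZMod 2)[X]) ∣ f2) : False := by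
  have key : f2 = (X) * (X^5 + X^4 + X + 1) + (1) := by
    unfold f2; linear_combination (0 : (ZMod 2)[X]) * two0
  have hr : (X : (ZMod 2)[X]) ∣ (1) := (dvd_add_right (dvd_mul_right _ _)).mp (key ▸ h)
  have hdr : ((1) : (ZMod 2)[X]).degree = 0 := by compute_degree!
  have hrne : ((1) : (ZMod 2)[X]) ≠ 0 := fun hz => by simp [hz] at hdr
  have hd := Polynomial.degree_le_of_dvd hr hrne
  have hdc : ((X) : (ZMod 2)[X]).degree = 1 := by compute_degree!
  rw [hdc, hdr] at hd
  exact absurd hd (by decide)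

lemma case1 (h : (X + 1 : (ZMod 2)[X]) ∣ f2) : False := by
  have key : f2 = (X + 1) * (X^5 + X) + (1) := by
    unfold f2; linear_combination (0 : (ZMod 2)[X]) * two0
  have hr : (X + 1 : (ZMod 2)[X]) ∣ (1) := (dvd_add_right (dvd_mul_right _ _)).mp (key ▸ h)
  have hdr : ((1) : (ZMod 2)[X]).degree = 0 := by compute_degree!
  have hrne : ((1) : (ZMod 2)[X]) ≠ 0 := fun hz => by simp [hz] at hdr
  have hd := Polynomial.degree_le_of_dvd hr hrne
  have hdc : ((X + 1) : (ZMod 2)[X]).degree = 1 := by compute_degree!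
  rw [hdc, hdr] at hd
  exact absurd hd (by decide)

lemma case2 (h : (X^2 : (ZMod 2)[X]) ∣ f2) : False := by
  have key : f2 = (X^2) * (X^4 + X^3 + 1) + (X + 1) := by
    unfold f2; linear_combination (0 : (ZMod 2)[X]) * two0
  have hr : (X^2 : (ZMod 2)[X]) ∣ (X + 1) := (dvd_add_right (dvd_mul_right _ _)).mp (key ▸ h)
  have hdr : ((X + 1) : (ZMod 2)[X]).degree = 1 := by compute_degree!
  have hrne : ((X + 1) : (ZMod 2)[X]) ≠ 0 := fun hz => by simp [hz] at hdr
  have hd := Polynomial.degree_le_of_dvd hr hrne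
  have hdc : ((X^2) : (ZMod 2)[X]).degree = 2 := by compute_degree!
  rw [hdc, hdr] at hd
  exact absurd hd (by decide)

lemma case3 (h : (X^2 + 1 : (ZMod 2)[X]) ∣ f2) : False := by
  have key : f2 = (X^2 + 1) * (X^4 + X^3 + X^2 + X) + (1) := by
    unfold f2; linear_combination (-X^4 - X^3 : (ZMod 2)[X]) * two0
  have hr : (X^2 + 1 : (ZMod 2)[X]) ∣ (1) := (dvd_add_right (dvd_mul_right _ _)).mp (key ▸ h)
  have hdr : ((1) : (ZMod 2)[X]).degree = 0 := by compute_degree!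
  have hrne : ((1) : (ZMod 2)[X]) ≠ 0 := fun hz => by simp [hz] at hdr
  have hd := Polynomial.degree_le_of_dvd hr hrne
  have hdc : ((X^2 + 1) : (ZMod 2)[X]).degree = 2 := by compute_degree!
  rw [hdc, hdr] at hd
  exact absurd hd (by decide)

lemma case4 (h : (X^2 + X : (ZMod 2)[X]) ∣ f2) : False := by
  have key : f2 = (X^2 + X) * (X^4 + 1) + (1) := by
    unfold f2; linear_combination (0 : (ZMod 2)[X]) * two0
  have hr : (X^2 + X : (ZMod 2)[X]) ∣ (1) := (dvd_add_right (dvd_mul_right _ _)).mp (key ▸ h)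
  have hdr : ((1) : (ZMod 2)[X]).degree = 0 := by compute_degree!
  have hrne : ((1) : (ZMod 2)[X]) ≠ 0 := fun hz => by simp [hz] at hdr
  have hd := Polynomial.degree_le_of_dvd hr hrne
  have hdc : ((X^2 + X) : (ZMod 2)[X]).degree = 2 := by compute_degree!
  rw [hdc, hdr] at hd
  exact absurd hd (by decide)

lemma case5 (h : (X^2 + X + 1 : (ZMod 2)[X]) ∣ f2) : False := by
  have key : f2 = (X^2 + X + 1) * (X^4 + X^2 + X + 1) + (X) := by
    unfold f2; linear_combination (-X^4 - X^3 - X^2 - X : (ZMod 2)[X]) * two0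
  have hr : (X^2 + X + 1 : (ZMod 2)[X]) ∣ (X) := (dvd_add_right (dvd_mul_right _ _)).mp (key ▸ h)
  have hdr : ((X) : (ZMod 2)[X]).degree = 1 := by compute_degree!
  have hrne : ((X) : (ZMod 2)[X]) ≠ 0 := fun hz => by simp [hz] at hdr
  have hd := Polynomial.degree_le_of_dvd hr hrne
  have hdc : ((X^2 + X + 1) : (ZMod 2)[X]).degree = 2 := by compute_degree!
  rw [hdc, hdr] at hd
  exact absurd hd (by decide)

lemma case6 (h : (X^3 : (ZMod 2)[X]) ∣ f2) : False := by
  have key : f2 = (X^3) * (X^3 + X^2) + (X^2 + X + 1) := by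
    unfold f2; linear_combination (0 : (ZMod 2)[X]) * two0
  have hr : (X^3 : (ZMod 2)[X]) ∣ (X^2 + X + 1) := (dvd_add_right (dvd_mul_right _ _)).mp (key ▸ h)
  have hdr : ((X^2 + X + 1) : (ZMod 2)[X]).degree = 2 := by compute_degree!
  have hrne : ((X^2 + X + 1) : (ZMod 2)[X]) ≠ 0 := fun hz => by simp [hz] at hdr
  have hd := Polynomial.degree_le_of_dvd hr hrne
  have hdc : ((X^3) : (ZMod 2)[X]).degree = 3 := by compute_degree!
  rw [hdc, hdr] at hd
  exact absurd hd (by decide)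

lemma case7 (h : (X^3 + 1 : (ZMod 2)[X]) ∣ f2) : False := by
  have key : f2 = (X^3 + 1) * (X^3 + X^2 + 1) + (X) := by
    unfold f2; linear_combination (-X^3 : (ZMod 2)[X]) * two0
  have hr : (X^3 + 1 : (ZMod 2)[X]) ∣ (X) := (dvd_add_right (dvd_mul_right _ _)).mp (key ▸ h)
  have hdr : ((X) : (ZMod 2)[X]).degree = 1 := by compute_degree!
  have hrne : ((X) : (ZMod 2)[X]) ≠ 0 := fun hz => by simp [hz] at hdr
  have hd := Polynomial.degree_le_of_dvd hr hrne
  have hdc : ((X^3 + 1) : (ZMod 2)[X]).degree = 3 := by compute_degree!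
  rw [hdc, hdr] at hd
  exact absurd hd (by decide)

lemma case8 (h : (X^3 + X : (ZMod 2)[X]) ∣ f2) : False := by
  have key : f2 = (X^3 + X) * (X^3 + X^2 + X + 1) + (1) := by
    unfold f2; linear_combination (-X^4 - X^3 : (ZMod 2)[X]) * two0
  have hr : (X^3 + X : (ZMod 2)[X]) ∣ (1) := (dvd_add_right (dvd_mul_right _ _)).mp (key ▸ h)
  have hdr : ((1) : (ZMod 2)[X]).degree = 0 := by compute_degree!
  have hrne : ((1) : (ZMod 2)[X]) ≠ 0 := fun hz => by simp [hz] at hdr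
  have hd := Polynomial.degree_le_of_dvd hr hrne
  have hdc : ((X^3 + X) : (ZMod 2)[X]).degree = 3 := by compute_degree!
  rw [hdc, hdr] at hd
  exact absurd hd (by decide)

lemma case9 (h : (X^3 + X + 1 : (ZMod 2)[X]) ∣ f2) : False := by
  have key : f2 = (X^3 + X + 1) * (X^3 + X^2 + X) + (X^2 + 1) := by
    unfold f2; linear_combination (-X^4 - X^3 - X^2 : (ZMod 2)[X]) * two0
  have hr : (X^3 + X + 1 : (ZMod 2)[X]) ∣ (X^2 + 1) := (dvd_add_right (dvd_mul_right _ _)).mp (key ▸ h)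
  have hdr : ((X^2 + 1) : (ZMod 2)[X]).degree = 2 := by compute_degree!
  have hrne : ((X^2 + 1) : (ZMod 2)[X]) ≠ 0 := fun hz => by simp [hz] at hdr
  have hd := Polynomial.degree_le_of_dvd hr hrne
  have hdc : ((X^3 + X + 1) : (ZMod 2)[X]).degree = 3 := by compute_degree!
  rw [hdc, hdr] at hd
  exact absurd hd (by decide)

lemma case10 (h : (X^3 + X^2 : (ZMod 2)[X]) ∣ f2) : False := by
  have key : f2 = (X^3 + X^2) * (X^3) + (X^2 + X + 1) := by
    unfold f2; linear_combination (0 : (ZMod 2)[X]) * two0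
  have hr : (X^3 + X^2 : (ZMod 2)[X]) ∣ (X^2 + X + 1) := (dvd_add_right (dvd_mul_right _ _)).mp (key ▸ h)
  have hdr : ((X^2 + X + 1) : (ZMod 2)[X]).degree = 2 := by compute_degree!
  have hrne : ((X^2 + X + 1) : (ZMod 2)[X]) ≠ 0 := fun hz => by simp [hz] at hdr
  have hd := Polynomial.degree_le_of_dvd hr hrne
  have hdc : ((X^3 + X^2) : (ZMod 2)[X]).degree = 3 := by compute_degree!
  rw [hdc, hdr] at hd
  exact absurd hd (by decide)

lemma case11 (h : (X^3 + X^2 + 1 : (ZMod 2)[X]) ∣ f2) : False := by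
  have key : f2 = (X^3 + X^2 + 1) * (X^3 + 1) + (X) := by
    unfold f2; linear_combination (-X^3 : (ZMod 2)[X]) * two0
  have hr : (X^3 + X^2 + 1 : (ZMod 2)[X]) ∣ (X) := (dvd_add_right (dvd_mul_right _ _)).mp (key ▸ h)
  have hdr : ((X) : (ZMod 2)[X]).degree = 1 := by compute_degree!
  have hrne : ((X) : (ZMod 2)[X]) ≠ 0 := fun hz => by simp [hz] at hdr
  have hd := Polynomial.degree_le_of_dvd hr hrne
  have hdc : ((X^3 + X^2 + 1) : (ZMod 2)[X]).degree = 3 := by compute_degree!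
  rw [hdc, hdr] at hd
  exact absurd hd (by decide)

lemma case12 (h : (X^3 + X^2 + X : (ZMod 2)[X]) ∣ f2) : False := by
  have key : f2 = (X^3 + X^2 + X) * (X^3 + X + 1) + (X^2 + 1) := by
    unfold f2; linear_combination (-X^4 - X^3 - X^2 : (ZMod 2)[X]) * two0
  have hr : (X^3 + X^2 + X : (ZMod 2)[X]) ∣ (X^2 + 1) := (dvd_add_right (dvd_mul_right _ _)).mp (key ▸ h)
  have hdr : ((X^2 + 1) : (ZMod 2)[X]).degree = 2 := by compute_degree!
  have hrne : ((X^2 + 1) : (ZMod 2)[X]) ≠ 0 := fun hz => by simp [hz] at hdr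
  have hd := Polynomial.degree_le_of_dvd hr hrne
  have hdc : ((X^3 + X^2 + X) : (ZMod 2)[X]).degree = 3 := by compute_degree!
  rw [hdc, hdr] at hd
  exact absurd hd (by decide)

lemma case13 (h : (X^3 + X^2 + X + 1 : (ZMod 2)[X]) ∣ f2) : False := by
  have key : f2 = (X^3 + X^2 + X + 1) * (X^3 + X) + (1) := by
    unfold f2; linear_combination (-X^4 - X^3 : (ZMod 2)[X]) * two0
  have hr : (X^3 + X^2 + X + 1 : (ZMod 2)[X]) ∣ (1) := (dvd_add_right (dvd_mul_right _ _)).mp (key ▸ h)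
  have hdr : ((1) : (ZMod 2)[X]).degree = 0 := by compute_degree!
  have hrne : ((1) : (ZMod 2)[X]) ≠ 0 := fun hz => by simp [hz] at hdr
  have hd := Polynomial.degree_le_of_dvd hr hrne
  have hdc : ((X^3 + X^2 + X + 1) : (ZMod 2)[X]).degree = 3 := by compute_degree!
  rw [hdc, hdr] at hd
  exact absurd hd (by decide)

lemma noSmallFactor (c : (ZMod 2)[X]) (hdvd : c ∣ f2)
    (h1 : 1 ≤ c.natDegree) (h3 : c.natDegree ≤ 3) : False := by
  have hc0 : c ≠ 0 := fun h => by simp [h] at h1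
  have hm : c.Monic := by
    have hl : c.leadingCoeff ≠ 0 := Polynomial.leadingCoeff_ne_zero.mpr hc0
    exact (show ∀ x : ZMod 2, x ≠ 0 → x = 1 by decide) _ hl
  have hcases : c.natDegree = 1 ∨ c.natDegree = 2 ∨ c.natDegree = 3 := by omega
  rcases hcases with hd | hd | hd
  · have hexp := c.as_sum_range' 2 (by omega)
    have hmc : c.coeff 1 = 1 := by have := hm.coeff_natDegree; rwa [hd] at this
    rw [Finset.sum_range_succ, Finset.sum_range_one, hmc] at hexp
    rcases (show ∀ x : ZMod 2, x = 0 ∨ x = 1 by decide) (c.coeff 0) with h0 | h0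
    · refine case0 ?_
      have hc : c = (X : (ZMod 2)[X]) := by
        rw [hexp, h0]
        simp [← Polynomial.C_mul_X_pow_eq_monomial]
        try ring
      rwa [hc] at hdvd
    · refine case1 ?_
      have hc : c = (X + 1 : (ZMod 2)[X]) := by
        rw [hexp, h0]
        simp [← Polynomial.C_mul_X_pow_eq_monomial]
        try ring
      rwa [hc] at hdvd
  · have hexp := c.as_sum_range' 3 (by omega)
    have hmc : c.coeff 2 = 1 := by have := hm.coeff_natDegree; rwa [hd] at this
    rw [Finset.sum_range_succ, Finset.sum_range_succ, Finset.sum_range_one, hmc] at hexp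
    rcases (show ∀ x : ZMod 2, x = 0 ∨ x = 1 by decide) (c.coeff 0) with h0 | h0
    · rcases (show ∀ x : ZMod 2, x = 0 ∨ x = 1 by decide) (c.coeff 1) with h1 | h1
      · refine case2 ?_
        have hc : c = (X^2 : (ZMod 2)[X]) := by
          rw [hexp, h0, h1]
          simp [← Polynomial.C_mul_X_pow_eq_monomial]
          try ring
        rwa [hc] at hdvd
      · refine case4 ?_
        have hc : c = (X^2 + X : (ZMod 2)[X]) := by
          rw [hexp, h0, h1]
          simp [← Polynomial.C_mul_X_pow_eq_monomial]
          try ring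
        rwa [hc] at hdvd
    · rcases (show ∀ x : ZMod 2, x = 0 ∨ x = 1 by decide) (c.coeff 1) with h1 | h1
      · refine case3 ?_
        have hc : c = (X^2 + 1 : (ZMod 2)[X]) := by
          rw [hexp, h0, h1]
          simp [← Polynomial.C_mul_X_pow_eq_monomial]
          try ring
        rwa [hc] at hdvd
      · refine case5 ?_
        have hc : c = (X^2 + X + 1 : (ZMod 2)[X]) := by
          rw [hexp, h0, h1]
          simp [← Polynomial.C_mul_X_pow_eq_monomial]
          try ring
        rwa [hc] at hdvd
  · have hexp := c.as_sum_range' 4 (by omega)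
    have hmc : c.coeff 3 = 1 := by have := hm.coeff_natDegree; rwa [hd] at this
    rw [Finset.sum_range_succ, Finset.sum_range_succ, Finset.sum_range_succ, Finset.sum_range_one, hmc] at hexp
    rcases (show ∀ x : ZMod 2, x = 0 ∨ x = 1 by decide) (c.coeff 0) with h0 | h0
    · rcases (show ∀ x : ZMod 2, x = 0 ∨ x = 1 by decide) (c.coeff 1) with h1 | h1
      · rcases (show ∀ x : ZMod 2, x = 0 ∨ x = 1 by decide) (c.coeff 2) with h2 | h2
        · refine case6 ?_
          have hc : c = (X^3 : (ZMod 2)[X]) := by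
            rw [hexp, h0, h1, h2]
            simp [← Polynomial.C_mul_X_pow_eq_monomial]
            try ring
          rwa [hc] at hdvd
        · refine case10 ?_
          have hc : c = (X^3 + X^2 : (ZMod 2)[X]) := by
            rw [hexp, h0, h1, h2]
            simp [← Polynomial.C_mul_X_pow_eq_monomial]
            try ring
          rwa [hc] at hdvd
      · rcases (show ∀ x : ZMod 2, x = 0 ∨ x = 1 by decide) (c.coeff 2) with h2 | h2
        · refine case8 ?_
          have hc : c = (X^3 + X : (ZMod 2)[X]) := by
            rw [hexp, h0, h1, h2]
            simp [← Polynomial.C_mul_X_pow_eq_monomial]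
            try ring
          rwa [hc] at hdvd
        · refine case12 ?_
          have hc : c = (X^3 + X^2 + X : (ZMod 2)[X]) := by
            rw [hexp, h0, h1, h2]
            simp [← Polynomial.C_mul_X_pow_eq_monomial]
            try ring
          rwa [hc] at hdvd
    · rcases (show ∀ x : ZMod 2, x = 0 ∨ x = 1 by decide) (c.coeff 1) with h1 | h1
      · rcases (show ∀ x : ZMod 2, x = 0 ∨ x = 1 by decide) (c.coeff 2) with h2 | h2
        · refine case7 ?_
          have hc : c = (X^3 + 1 : (ZMod 2)[X]) := by
            rw [hexp, h0, h1, h2]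
            simp [← Polynomial.C_mul_X_pow_eq_monomial]
            try ring
          rwa [hc] at hdvd
        · refine case11 ?_
          have hc : c = (X^3 + X^2 + 1 : (ZMod 2)[X]) := by
            rw [hexp, h0, h1, h2]
            simp [← Polynomial.C_mul_X_pow_eq_monomial]
            try ring
          rwa [hc] at hdvd
      · rcases (show ∀ x : ZMod 2, x = 0 ∨ x = 1 by decide) (c.coeff 2) with h2 | h2
        · refine case9 ?_
          have hc : c = (X^3 + X + 1 : (ZMod 2)[X]) := by
            rw [hexp, h0, h1, h2]
            simp [← Polynomial.C_mul_X_pow_eq_monomial]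
            try ring
          rwa [hc] at hdvd
        · refine case13 ?_
          have hc : c = (X^3 + X^2 + X + 1 : (ZMod 2)[X]) := by
            rw [hexp, h0, h1, h2]
            simp [← Polynomial.C_mul_X_pow_eq_monomial]
            try ring
          rwa [hc] at hdvd

lemma f2irr : Irreducible f2 := by
  have hf2d : f2.natDegree = 6 := by unfold f2; compute_degree!
  constructor
  · exact Polynomial.not_isUnit_of_natDegree_pos _ (by omega)
  · intro a b hab
    by_contra hcon
    push_neg at hcon
    obtain ⟨ha, hb⟩ := hcon
    have ha0 : a ≠ 0 := by rintro rfl; rw [zero_mul] at hab; simp [hab] at hf2d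
    have hb0 : b ≠ 0 := by rintro rfl; rw [mul_zero] at hab; simp [hab] at hf2d
    have hsum : a.natDegree + b.natDegree = 6 := by
      have := Polynomial.natDegree_mul ha0 hb0
      rw [← hab, hf2d] at this; omega
    have ha1 : 1 ≤ a.natDegree := by
      by_contra h
      have h0 : a.natDegree = 0 := by omega
      obtain ⟨x, rfl⟩ := Polynomial.natDegree_eq_zero.mp h0
      exact ha (Polynomial.isUnit_C.mpr (isUnit_iff_ne_zero.mpr (fun hx => ha0 (by rw [hx, map_zero]))))
    have hb1 : 1 ≤ b.natDegree := by
      by_contra h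
      have h0 : b.natDegree = 0 := by omega
      obtain ⟨x, rfl⟩ := Polynomial.natDegree_eq_zero.mp h0
      exact hb (Polynomial.isUnit_C.mpr (isUnit_iff_ne_zero.mpr (fun hx => hb0 (by rw [hx, map_zero]))))
    rcases le_or_gt a.natDegree 3 with h | h
    · exact noSmallFactor a ⟨b, hab⟩ ha1 h
    · exact noSmallFactor b ⟨a, by rw [hab]; ring⟩ hb1 (by omega)

noncomputable def fZ : ℤ[X] := X^6 - 3*X^5 - 6*X^4 + 4*X^3 + 5*X^2 - X - 1

lemma fZmonic : fZ.Monic := by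
  unfold fZ
  monicity!

lemma fZmap2 : fZ.map (Int.castRingHom (ZMod 2)) = f2 := by
  unfold fZ f2
  simp only [Polynomial.map_add, Polynomial.map_sub, Polynomial.map_mul, Polynomial.map_pow,
    Polynomial.map_X, Polynomial.map_ofNat, Polynomial.map_one]
  linear_combination (-2*X^5 - 3*X^4 + 2*X^3 + 2*X^2 - X - 1 : (ZMod 2)[X]) * two0

lemma fZirr : Irreducible fZ :=
  fZmonic.irreducible_of_irreducible_map (Int.castRingHom (ZMod 2)) fZ (fZmap2 ▸ f2irr)

theorem stmt6 :
    Irreducible (X^6 - 3*X^5 - 6*X^4 + 4*X^3 + 5*X^2 - X - 1 : ℚ[X]) := by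
  have h := (fZmonic.irreducible_iff_irreducible_map_fraction_map (K := ℚ)).mp fZirr
  have hmap : fZ.map (algebraMap ℤ ℚ) = (X^6 - 3*X^5 - 6*X^4 + 4*X^3 + 5*X^2 - X - 1 : ℚ[X]) := by
    unfold fZ
    simp only [Polynomial.map_add, Polynomial.map_sub, Polynomial.map_mul, Polynomial.map_pow,
      Polynomial.map_X, Polynomial.map_ofNat, Polynomial.map_one]
  rwa [hmap] at h
end

section
/- The number -1/(2 sin(3π/26)) is a root of x^6 - 3x^5 - 6x^4 + 4x^3 + 5x^2 - x - 1 and has absolute value strictly greater than 1. -/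
/-!
Put `y = 2 sin (3π/26) = 2 cos α` with `α = 5π/13`. The Vieta–Fibonacci polynomials satisfy
`S n (2 cos α) * sin α = sin ((n + 1) α)`, and `sin 7α = sin 6α`, so `y` is a root of
`S 6 - S 5 = y^6 - y^5 - 5y^4 + 4y^3 + 6y^2 - 3y - 1`. Reversing this polynomial and substituting
`x = -1/y` gives the sextic of the statement, and `|x| > 1` because `y < 6π/26 < 1`.
-/

open Real

open Polynomial in
theorem Polynomial.Chebyshev.S_six_sub_S_five (R : Type*) [CommRing R] :
    S R 6 - S R 5 = X ^ 6 - X ^ 5 - 5 * X ^ 4 + 4 * X ^ 3 + 6 * X ^ 2 - 3 * X - 1 := by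
  have h3 : S R 3 = X ^ 3 - 2 * X := by
    rw [show (3 : ℤ) = 1 + 2 by norm_num, S_add_two, show (1 + 1 : ℤ) = 2 by norm_num, S_two,
      S_one]
    ring
  have h4 : S R 4 = X ^ 4 - 3 * X ^ 2 + 1 := by
    rw [show (4 : ℤ) = 2 + 2 by norm_num, S_add_two, show (2 + 1 : ℤ) = 3 by norm_num, h3, S_two]
    ring
  have h5 : S R 5 = X ^ 5 - 4 * X ^ 3 + 3 * X := by
    rw [show (5 : ℤ) = 3 + 2 by norm_num, S_add_two, show (3 + 1 : ℤ) = 4 by norm_num, h4, h3]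
    ring
  rw [show (6 : ℤ) = 4 + 2 by norm_num, S_add_two, show (4 + 1 : ℤ) = 5 by norm_num, h5, h4]
  ring

open Polynomial Polynomial.Chebyshev in
theorem two_mul_cos_sextic_eq_zero {α : ℝ} (hα : sin α ≠ 0) (h : sin (7 * α) = sin (6 * α)) :
    (2 * cos α) ^ 6 - (2 * cos α) ^ 5 - 5 * (2 * cos α) ^ 4 + 4 * (2 * cos α) ^ 3
      + 6 * (2 * cos α) ^ 2 - 3 * (2 * cos α) - 1 = 0 := by
  have hS : (S ℝ 6 - S ℝ 5).eval (2 * cos α) * sin α = sin (7 * α) - sin (6 * α) := by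
    rw [eval_sub, sub_mul, S_two_mul_real_cos, S_two_mul_real_cos]
    norm_num
  rw [h, sub_self, S_six_sub_S_five] at hS
  simpa [hα] using hS

theorem reverse_sextic_eq_zero {y : ℝ} (hy : y ≠ 0)
    (h : y ^ 6 - y ^ 5 - 5 * y ^ 4 + 4 * y ^ 3 + 6 * y ^ 2 - 3 * y - 1 = 0) :
    (-1 / y) ^ 6 - 3 * (-1 / y) ^ 5 - 6 * (-1 / y) ^ 4 + 4 * (-1 / y) ^ 3 + 5 * (-1 / y) ^ 2
      - (-1 / y) - 1 = 0 := by
  field_simp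
  linear_combination -h

theorem sin_seven_mul_eq_sin_six_mul_five_pi_div_thirteen :
    sin (7 * (5 * π / 13)) = sin (6 * (5 * π / 13)) := by
  rw [← sin_pi_sub, ← sin_add_nat_mul_two_pi _ 2]
  congr 1
  push_cast
  ring

theorem sin_three_pi_div_twentysix_eq_cos : sin (3 * π / 26) = cos (5 * π / 13) := by
  rw [← cos_pi_div_two_sub]
  ring_nf

theorem sin_three_pi_div_twentysix_pos : 0 < sin (3 * π / 26) :=
  sin_pos_of_pos_of_lt_pi (by positivity) (by linarith [pi_pos])

theorem two_mul_sin_three_pi_div_twentysix_lt_one : 2 * sin (3 * π / 26) < 1 := by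
  have := sin_lt (show 0 < 3 * π / 26 by positivity)
  linarith [pi_lt_four]

theorem stmt9 :
    ((-1 / (2 * Real.sin (3 * π / 26)))^6 - 3 * (-1 / (2 * Real.sin (3 * π / 26)))^5
      - 6 * (-1 / (2 * Real.sin (3 * π / 26)))^4 + 4 * (-1 / (2 * Real.sin (3 * π / 26)))^3
      + 5 * (-1 / (2 * Real.sin (3 * π / 26)))^2 - (-1 / (2 * Real.sin (3 * π / 26))) - 1 = 0)
    ∧ 1 < |(-1 / (2 * Real.sin (3 * π / 26)) : ℝ)| := by
  have hpos : 0 < 2 * sin (3 * π / 26) := mul_pos two_pos sin_three_pi_div_twentysix_pos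
  have hα : sin (5 * π / 13) ≠ 0 :=
    (sin_pos_of_pos_of_lt_pi (by positivity) (by linarith [pi_pos])).ne'
  refine ⟨reverse_sextic_eq_zero hpos.ne' ?_, ?_⟩
  · rw [sin_three_pi_div_twentysix_eq_cos]
    exact two_mul_cos_sextic_eq_zero hα sin_seven_mul_eq_sin_six_mul_five_pi_div_thirteen
  · rw [abs_div, abs_neg, abs_one, abs_of_pos hpos, one_lt_div hpos]
    exact two_mul_sin_three_pi_div_twentysix_lt_one
end

section
/- The number μ = 1/(2 sin(π/21)) is not a Pisot number: the number 1/(2 sin(5π/42)) is a root of x^6 - 8x^5 + 8x^4 + 6x^3 - 6x^2 - x + 1 distinct from μ and has modulus greater than 1. -/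
open Real

theorem stmt12 :
    ((1 / (2 * Real.sin (5 * π / 42)))^6 - 8 * (1 / (2 * Real.sin (5 * π / 42)))^5
      + 8 * (1 / (2 * Real.sin (5 * π / 42)))^4 + 6 * (1 / (2 * Real.sin (5 * π / 42)))^3
      - 6 * (1 / (2 * Real.sin (5 * π / 42)))^2 - (1 / (2 * Real.sin (5 * π / 42))) + 1 = 0)
    ∧ (1 / (2 * Real.sin (5 * π / 42)) : ℝ) ≠ 1 / (2 * Real.sin (π / 21))
    ∧ 1 < |(1 / (2 * Real.sin (5 * π / 42)) : ℝ)| := by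
  have hpi := Real.pi_pos
  set θ : ℝ := 8 * π / 21 with hθ
  set c : ℝ := Real.cos θ with hc
  -- sin(5π/42) = cos(8π/21)
  have hsin : Real.sin (5 * π / 42) = c := by
    rw [hc, hθ, ← Real.cos_pi_div_two_sub]
    norm_num
    ring_nf
  -- cos(7θ) = -1/2
  have h7v : Real.cos (7 * θ) = -(1/2) := by
    have : 7 * θ = 2 * π / 3 + 2 * π := by rw [hθ]; ring
    rw [this, Real.cos_add_two_pi]
    have : (2:ℝ) * π / 3 = π - π / 3 := by ring
    rw [this, Real.cos_pi_sub, Real.cos_pi_div_three]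
  -- cos(7θ) polynomial identity
  have hsum : Real.cos (7*θ) + Real.cos θ = 2 * Real.cos (4*θ) * Real.cos (3*θ) := by
    have := Real.cos_add_cos (7*θ) θ
    rw [this]; ring_nf
  have h3 : Real.cos (3*θ) = 4 * c^3 - 3 * c := Real.cos_three_mul θ
  have h4 : Real.cos (4*θ) = 2 * (2*c^2 - 1)^2 - 1 := by
    have h2 : Real.cos (2*θ) = 2 * c^2 - 1 := Real.cos_two_mul θ
    have : (4:ℝ)*θ = 2*(2*θ) := by ring
    rw [this, Real.cos_two_mul, h2]
  have hpoly : 128*c^7 - 224*c^5 + 112*c^3 - 14*c + 1 = 0 := by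
    have h7 : Real.cos (7*θ) = 2 * (2 * (2*c^2 - 1)^2 - 1) * (4*c^3 - 3*c) - c := by
      have := hsum
      rw [h3, h4] at this
      linarith
    rw [h7v] at h7
    nlinarith [h7]
  -- c > 0
  have hcpos : 0 < c := by
    rw [hc]
    apply Real.cos_pos_of_mem_Ioo
    constructor
    · rw [hθ]; nlinarith
    · rw [hθ]; nlinarith
  -- c ≠ -1/2 so divide out (2c+1)
  have hq : (2*c)^6 - (2*c)^5 - 6*(2*c)^4 + 6*(2*c)^3 + 8*(2*c)^2 - 8*(2*c) + 1 = 0 := by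
    have hfac : (2*c + 1) * ((2*c)^6 - (2*c)^5 - 6*(2*c)^4 + 6*(2*c)^3 + 8*(2*c)^2 - 8*(2*c) + 1)
        = 128*c^7 - 224*c^5 + 112*c^3 - 14*c + 1 := by ring
    have hne : 2*c + 1 ≠ 0 := by positivity
    have := hfac.trans hpoly
    exact (mul_eq_zero.mp this).resolve_left hne
  have hspos : 0 < 2 * Real.sin (5 * π / 42) := by rw [hsin]; positivity
  have hsne : 2 * Real.sin (5 * π / 42) ≠ 0 := ne_of_gt hspos
  refine ⟨?_, ?_, ?_⟩
  · rw [hsin]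
    have h6 : (2*c)^6 ≠ 0 := by positivity
    have key : (1 / (2*c))^6 - 8 * (1 / (2*c))^5 + 8 * (1 / (2*c))^4 + 6 * (1 / (2*c))^3
        - 6 * (1 / (2*c))^2 - (1 / (2*c)) + 1
        = ((2*c)^6 - (2*c)^5 - 6*(2*c)^4 + 6*(2*c)^3 + 8*(2*c)^2 - 8*(2*c) + 1) / (2*c)^6 := by
      field_simp
      ring
    rw [key, hq, zero_div]
  · have hlt : Real.sin (π / 21) < Real.sin (5 * π / 42) := by
      apply Real.sin_lt_sin_of_lt_of_le_pi_div_two <;> linarith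
    have h1 : 0 < Real.sin (π / 21) := by
      apply Real.sin_pos_of_pos_of_lt_pi <;> linarith
    have : 1 / (2 * Real.sin (5 * π / 42)) < 1 / (2 * Real.sin (π / 21)) := by
      apply one_div_lt_one_div_of_lt <;> linarith
    exact ne_of_lt this
  · have hlt : Real.sin (5 * π / 42) < 1/2 := by
      have := Real.sin_lt_sin_of_lt_of_le_pi_div_two (x := 5*π/42) (y := π/6)
        (by linarith) (by linarith) (by linarith)
      rwa [Real.sin_pi_div_six] at this
    rw [abs_of_pos (by positivity)]
    rw [lt_div_iff₀ hspos]
    linarith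
end

section
/- The roots of x^6 - 3x^5 - 6x^4 + 4x^3 + 5x^2 - x - 1 are exactly 1/s_6, -1/s_5, 1/s_4, -1/s_3, 1/s_2, -1/s_1, where s_j = 2 sin((13-2j)π/26); in particular these six numbers are pairwise distinct. -/
open Real

lemma aux_q (z : ℂ) (h13 : z ^ 13 = 1) (h1 : z ≠ 1) :
    (z + z⁻¹) ^ 6 + (z + z⁻¹) ^ 5 - 5 * (z + z⁻¹) ^ 4 - 4 * (z + z⁻¹) ^ 3
      + 6 * (z + z⁻¹) ^ 2 + 3 * (z + z⁻¹) - 1 = 0 := by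
  have hz : z ≠ 0 := by rintro rfl; simp at h13
  have hsum : z^12+z^11+z^10+z^9+z^8+z^7+z^6+z^5+z^4+z^3+z^2+z+1 = 0 := by
    have h1' : z - 1 ≠ 0 := sub_ne_zero.mpr h1
    have hmul : (z - 1) * (z^12+z^11+z^10+z^9+z^8+z^7+z^6+z^5+z^4+z^3+z^2+z+1) = 0 := by
      linear_combination h13
    exact (mul_eq_zero.mp hmul).resolve_left h1'
  have hinv : z⁻¹ = z ^ 12 := by
    exact inv_eq_of_mul_eq_one_right (by rw [← pow_succ']; exact h13)
  rw [hinv]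
  linear_combination (2 - 2*z - 5*z^2 + 5*z^3 + 6*z^4 + z^7 + z^8 + z^9 + z^10 + z^11
    - 2*z^12 - 10*z^13 + 10*z^14 + 15*z^15 + z^20 + z^21 + z^22 + z^23 - 5*z^24 + 10*z^25
    + 20*z^26 + z^33 + z^34 + z^35 + 5*z^36 + 15*z^37 + z^46 + z^47 + 6*z^48 + z^59) * h13 + hsum

lemma aux_p (c : ℝ) (hc : c ≠ 0)
    (hq : c ^ 6 + c ^ 5 - 5 * c ^ 4 - 4 * c ^ 3 + 6 * c ^ 2 + 3 * c - 1 = 0) :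
    (1/c) ^ 6 - 3 * (1/c) ^ 5 - 6 * (1/c) ^ 4 + 4 * (1/c) ^ 3 + 5 * (1/c) ^ 2 - (1/c) - 1 = 0 := by
  field_simp
  linear_combination (-1) * hq

lemma qcos (k : ℕ) (hk1 : 1 ≤ k) (hk6 : k ≤ 6) :
    (2 * Real.cos (2 * k * π / 13)) ^ 6 + (2 * Real.cos (2 * k * π / 13)) ^ 5
      - 5 * (2 * Real.cos (2 * k * π / 13)) ^ 4 - 4 * (2 * Real.cos (2 * k * π / 13)) ^ 3
      + 6 * (2 * Real.cos (2 * k * π / 13)) ^ 2 + 3 * (2 * Real.cos (2 * k * π / 13)) - 1 = 0 := by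
  set θ : ℝ := 2 * k * π / 13 with hθ
  set z : ℂ := Complex.exp (θ * Complex.I) with hz
  have h13 : z ^ 13 = 1 := by
    rw [hz, ← Complex.exp_nat_mul]
    rw [Complex.exp_eq_one_iff]
    exact ⟨k, by push_cast [hθ]; ring⟩
  have h1 : z ≠ 1 := by
    intro h
    rw [hz, Complex.exp_eq_one_iff] at h
    obtain ⟨n, hn⟩ := h
    have hn' : (θ : ℂ) * Complex.I = ((n : ℂ) * (2 * π)) * Complex.I := by
      linear_combination hn
    have hI : (θ : ℂ) = n * (2 * π) := mul_right_cancel₀ Complex.I_ne_zero hn'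
    have hre : θ = n * (2 * π) := by exact_mod_cast hI
    rw [hθ] at hre
    have hπ : (π : ℝ) ≠ 0 := Real.pi_ne_zero
    have : (k : ℝ) = 13 * n := by
      field_simp at hre
      nlinarith [hre, Real.pi_pos]
    have : (k : ℤ) = 13 * n := by exact_mod_cast this
    omega
  have hinv : z⁻¹ = Complex.exp (-θ * Complex.I) := by
    rw [hz, ← Complex.exp_neg]; ring_nf
  have hsum : z + z⁻¹ = ((2 * Real.cos θ : ℝ) : ℂ) := by
    rw [hinv, hz]
    push_cast
    rw [Complex.two_cos]
  have := aux_q z h13 h1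
  rw [hsum] at this
  exact_mod_cast this

set_option maxHeartbeats 2000000 in
theorem stmt19 (s : ℕ → ℝ)
    (hs : ∀ j, 1 ≤ j → j ≤ 6 → s j = 2 * Real.sin ((13 - 2 * (j : ℝ)) * π / 26)) :
    ([1 / s 6, -1 / s 5, 1 / s 4, -1 / s 3, 1 / s 2, -1 / s 1] : List ℝ).Nodup
    ∧ ∀ z : ℂ, z^6 - 3*z^5 - 6*z^4 + 4*z^3 + 5*z^2 - z - 1 = 0 ↔
        z ∈ (([1 / s 6, -1 / s 5, 1 / s 4, -1 / s 3, 1 / s 2, -1 / s 1] : List ℝ).map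
          (fun x => (x : ℂ))) := by
  have hπ := Real.pi_pos
  have hsc : ∀ j : ℕ, 1 ≤ j → j ≤ 6 → s j = 2 * Real.cos ((j : ℝ) * π / 13) := by
    intro j h1 h6
    rw [hs j h1 h6, ← Real.cos_pi_div_two_sub]
    congr 1
    ring
  have hpos : ∀ j : ℕ, 1 ≤ j → j ≤ 6 → 0 < s j := by
    intro j h1 h6
    rw [hsc j h1 h6]
    have hj0 : (1:ℝ) ≤ (j:ℝ) := by exact_mod_cast h1
    have hj6 : (j:ℝ) ≤ 6 := by exact_mod_cast h6
    have := Real.cos_pos_of_mem_Ioo (show (j:ℝ) * π / 13 ∈ Set.Ioo (-(π/2)) (π/2) from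
      ⟨by nlinarith, by nlinarith⟩)
    linarith
  have horder : ∀ i j : ℕ, 1 ≤ i → i < j → j ≤ 6 → s j < s i := by
    intro i j h1 hij h6
    have hi6 : i ≤ 6 := le_of_lt (lt_of_lt_of_le hij h6)
    have hj1 : 1 ≤ j := le_of_lt (lt_of_le_of_lt h1 hij)
    rw [hsc i h1 hi6, hsc j hj1 h6]
    have hi0 : (1:ℝ) ≤ (i:ℝ) := by exact_mod_cast h1
    have hj6' : (j:ℝ) ≤ 6 := by exact_mod_cast h6
    have hij' : (i:ℝ) < (j:ℝ) := by exact_mod_cast hij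
    have := Real.strictAntiOn_cos
      (show (i:ℝ) * π / 13 ∈ Set.Icc 0 π from ⟨by nlinarith, by nlinarith⟩)
      (show (j:ℝ) * π / 13 ∈ Set.Icc 0 π from ⟨by nlinarith, by nlinarith⟩)
      (by nlinarith)
    linarith
  -- connections s j to 2cos(2kπ/13)
  have hc1 : s 2 = 2 * Real.cos (2 * ((1:ℕ):ℝ) * π / 13) := by
    rw [hsc 2 (by norm_num) (by norm_num)]; norm_num
  have hc2 : s 4 = 2 * Real.cos (2 * ((2:ℕ):ℝ) * π / 13) := by
    rw [hsc 4 (by norm_num) (by norm_num)]; norm_num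
  have hc3 : s 6 = 2 * Real.cos (2 * ((3:ℕ):ℝ) * π / 13) := by
    rw [hsc 6 (by norm_num) (by norm_num)]; norm_num
  have hc4 : -(s 5) = 2 * Real.cos (2 * ((4:ℕ):ℝ) * π / 13) := by
    rw [hsc 5 (by norm_num) (by norm_num),
      show (2 * ((4:ℕ):ℝ) * π / 13) = π - 5 * π / 13 by push_cast; ring, Real.cos_pi_sub]
    push_cast; ring
  have hc5 : -(s 3) = 2 * Real.cos (2 * ((5:ℕ):ℝ) * π / 13) := by
    rw [hsc 3 (by norm_num) (by norm_num),
      show (2 * ((5:ℕ):ℝ) * π / 13) = π - 3 * π / 13 by push_cast; ring, Real.cos_pi_sub]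
    push_cast; ring
  have hc6 : -(s 1) = 2 * Real.cos (2 * ((6:ℕ):ℝ) * π / 13) := by
    rw [hsc 1 (by norm_num) (by norm_num),
      show (2 * ((6:ℕ):ℝ) * π / 13) = π - 1 * π / 13 by push_cast; ring, Real.cos_pi_sub]
    push_cast; ring
  -- the six real roots
  have hp : ∀ c : ℝ, c ≠ 0 →
      c ^ 6 + c ^ 5 - 5 * c ^ 4 - 4 * c ^ 3 + 6 * c ^ 2 + 3 * c - 1 = 0 →
      (1/c) ^ 6 - 3 * (1/c) ^ 5 - 6 * (1/c) ^ 4 + 4 * (1/c) ^ 3 + 5 * (1/c) ^ 2 - (1/c) - 1 = 0 :=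
    aux_p
  have R6 := hp (s 6) (hpos 6 (by norm_num) (by norm_num)).ne' (hc3 ▸ qcos 3 (by norm_num) (by norm_num))
  have R4 := hp (s 4) (hpos 4 (by norm_num) (by norm_num)).ne' (hc2 ▸ qcos 2 (by norm_num) (by norm_num))
  have R2 := hp (s 2) (hpos 2 (by norm_num) (by norm_num)).ne' (hc1 ▸ qcos 1 (by norm_num) (by norm_num))
  have R5 := hp (-(s 5)) (neg_ne_zero.mpr (hpos 5 (by norm_num) (by norm_num)).ne') (hc4 ▸ qcos 4 (by norm_num) (by norm_num))
  have R3 := hp (-(s 3)) (neg_ne_zero.mpr (hpos 3 (by norm_num) (by norm_num)).ne') (hc5 ▸ qcos 5 (by norm_num) (by norm_num))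
  have R1 := hp (-(s 1)) (neg_ne_zero.mpr (hpos 1 (by norm_num) (by norm_num)).ne') (hc6 ▸ qcos 6 (by norm_num) (by norm_num))
  have P1 := hpos 1 (by norm_num) (by norm_num)
  have P2 := hpos 2 (by norm_num) (by norm_num)
  have P3 := hpos 3 (by norm_num) (by norm_num)
  have P4 := hpos 4 (by norm_num) (by norm_num)
  have P5 := hpos 5 (by norm_num) (by norm_num)
  have P6 := hpos 6 (by norm_num) (by norm_num)
  have i64 : 1 / s 4 < 1 / s 6 := one_div_lt_one_div_of_lt P6 (horder 4 6 (by norm_num) (by norm_num) (by norm_num))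
  have i42 : 1 / s 2 < 1 / s 4 := one_div_lt_one_div_of_lt P4 (horder 2 4 (by norm_num) (by norm_num) (by norm_num))
  have i53 : 1 / s 3 < 1 / s 5 := one_div_lt_one_div_of_lt P5 (horder 3 5 (by norm_num) (by norm_num) (by norm_num))
  have i31 : 1 / s 1 < 1 / s 3 := one_div_lt_one_div_of_lt P3 (horder 1 3 (by norm_num) (by norm_num) (by norm_num))
  have pos2 : 0 < 1 / s 2 := one_div_pos.mpr P2
  have pos1 : 0 < 1 / s 1 := one_div_pos.mpr P1
  have e5 : -1 / s 5 = -(1 / s 5) := by ring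
  have e3 : -1 / s 3 = -(1 / s 3) := by ring
  have e1 : -1 / s 1 = -(1 / s 1) := by ring
  have hnodup : ([1 / s 6, -1 / s 5, 1 / s 4, -1 / s 3, 1 / s 2, -1 / s 1] : List ℝ).Nodup := by
    have n0 : (1 / s 6 : ℝ) ≠ -1 / s 5 := by intro h; linarith
    have n1 : (1 / s 6 : ℝ) ≠ 1 / s 4 := by intro h; linarith
    have n2 : (1 / s 6 : ℝ) ≠ -1 / s 3 := by intro h; linarith
    have n3 : (1 / s 6 : ℝ) ≠ 1 / s 2 := by intro h; linarith
    have n4 : (1 / s 6 : ℝ) ≠ -1 / s 1 := by intro h; linarith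
    have n5 : (-1 / s 5 : ℝ) ≠ 1 / s 4 := by intro h; linarith
    have n6 : (-1 / s 5 : ℝ) ≠ -1 / s 3 := by intro h; linarith
    have n7 : (-1 / s 5 : ℝ) ≠ 1 / s 2 := by intro h; linarith
    have n8 : (-1 / s 5 : ℝ) ≠ -1 / s 1 := by intro h; linarith
    have n9 : (1 / s 4 : ℝ) ≠ -1 / s 3 := by intro h; linarith
    have n10 : (1 / s 4 : ℝ) ≠ 1 / s 2 := by intro h; linarith
    have n11 : (1 / s 4 : ℝ) ≠ -1 / s 1 := by intro h; linarith
    have n12 : (-1 / s 3 : ℝ) ≠ 1 / s 2 := by intro h; linarith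
    have n13 : (-1 / s 3 : ℝ) ≠ -1 / s 1 := by intro h; linarith
    have n14 : (1 / s 2 : ℝ) ≠ -1 / s 1 := by intro h; linarith
    have v6 : (s 6)⁻¹ = 1 / s 6 := (one_div _).symm
    have v4 : (s 4)⁻¹ = 1 / s 4 := (one_div _).symm
    have v2 : (s 2)⁻¹ = 1 / s 2 := (one_div _).symm
    have o64 : s 6 < s 4 := horder 4 6 (by norm_num) (by norm_num) (by norm_num)
    have o42 : s 4 < s 2 := horder 2 4 (by norm_num) (by norm_num) (by norm_num)
    simp only [List.nodup_cons, List.mem_cons, List.mem_singleton, List.not_mem_nil, or_false,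
      not_or, List.nodup_nil, and_true, ne_eq, one_div]
    refine ⟨⟨?_,?_,?_,?_,?_⟩,⟨?_,?_,?_,?_⟩,⟨?_,?_,?_⟩,⟨?_,?_⟩,?_,not_false⟩ <;> intro h <;> linarith
  refine ⟨hnodup, ?_⟩
  intro z
  set P : Polynomial ℂ := Polynomial.X^6 - Polynomial.C 3 * Polynomial.X^5
    - Polynomial.C 6 * Polynomial.X^4 + Polynomial.C 4 * Polynomial.X^3
    + Polynomial.C 5 * Polynomial.X^2 - Polynomial.X - Polynomial.C 1 with hP
  have heval : ∀ w : ℂ, P.eval w = w^6 - 3*w^5 - 6*w^4 + 4*w^3 + 5*w^2 - w - 1 := by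
    intro w; simp [hP]
  have hdeg : P.natDegree = 6 := by unfold P; compute_degree!
  have hmonic : P.Monic := by unfold P; monicity!
  have hne : P ≠ 0 := hmonic.ne_zero
  set M : Multiset ℂ := ((List.map (fun x : ℝ => (x : ℂ))
      ([1 / s 6, -1 / s 5, 1 / s 4, -1 / s 3, 1 / s 2, -1 / s 1] : List ℝ)) : Multiset ℂ) with hM
  have key : ∀ r : ℝ, r^6 - 3*r^5 - 6*r^4 + 4*r^3 + 5*r^2 - r - 1 = 0 →
      ((r : ℂ) ∈ P.roots) := by
    intro r hr
    rw [Polynomial.mem_roots hne, Polynomial.IsRoot, heval]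
    exact_mod_cast congrArg (fun t : ℝ => (t : ℂ)) hr
  have hroot : ∀ x ∈ M, x ∈ P.roots := by
    intro x hx
    rw [hM] at hx
    rw [Multiset.mem_coe, List.mem_map] at hx
    obtain ⟨a, ha, rfl⟩ := hx
    fin_cases ha
    · exact key _ R6
    · exact key _ (by rw [show (-1 / s 5 : ℝ) = 1 / -s 5 by ring]; exact R5)
    · exact key _ R4
    · exact key _ (by rw [show (-1 / s 3 : ℝ) = 1 / -s 3 by ring]; exact R3)
    · exact key _ R2
    · exact key _ (by rw [show (-1 / s 1 : ℝ) = 1 / -s 1 by ring]; exact R1)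
  have hMnodup : M.Nodup := by
    rw [hM, Multiset.coe_nodup]
    exact hnodup.map (fun a b hab => by exact_mod_cast hab)
  have hle : M ≤ P.roots := (Multiset.le_iff_subset hMnodup).mpr hroot
  have hEq : M = P.roots := by
    refine Multiset.eq_of_le_of_card_le hle ?_
    have h1 : Multiset.card P.roots ≤ 6 := hdeg ▸ P.card_roots'
    have h2 : Multiset.card M = 6 := by rw [hM]; rfl
    omega
  constructor
  · intro h0
    have hz : z ∈ P.roots := (Polynomial.mem_roots hne).mpr (by rw [Polynomial.IsRoot, heval]; exact h0)
    rw [← hEq, hM] at hz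
    exact Multiset.mem_coe.mp hz
  · intro hz
    have hz' : z ∈ P.roots := by rw [← hEq, hM]; exact Multiset.mem_coe.mpr hz
    have := (Polynomial.mem_roots hne).mp hz'
    rw [Polynomial.IsRoot, heval] at this
    exact this
end
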